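/- Let E be a Hilbert B-module. The set Φ_E of equivalence classes [φ]_E of automorphisms φ of B admitting a φ-unitary on E (where φ ~ φ' iff they agree on B_E) forms a group under [φ]_E[φ']_E = [φ∘φ']_E, with identity [id_B]_E and inverse [φ]_E⁻¹ = [φ⁻¹]_E. -/

import Mathlib

open scoped RightActions InnerProductSpace

/-- The Hilbert C⋆-module class as it stood in the older Mathlib: a right module
(action of `Aᵐᵒᵖ`), inner product linear in the second variable. -/
class RightCStarModule (A E : Type*) [NonUnitalSemiring A] [StarRing A] [Module ℂ A]
    [AddCommGroup E] [Module ℂ E] [PartialOrder A] [SMul Aᵐᵒᵖ E] [Norm A] [Norm E]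
    extends Inner A E where
  inner_add_right {x y z : E} : Inner.inner A x (y + z) = Inner.inner A x y + Inner.inner A x z
  inner_self_nonneg {x : E} : 0 ≤ Inner.inner A x x
  inner_self {x : E} : Inner.inner A x x = 0 ↔ x = 0
  inner_op_smul_right {a : A} {x y : E} : Inner.inner A x (y <• a) = Inner.inner A x y * a
  inner_smul_right_complex {z : ℂ} {x y : E} : Inner.inner A x (z • y) = z • Inner.inner A x y
  star_inner (x y : E) : star (Inner.inner A x y) = Inner.inner A y x
  norm_eq_sqrt_norm_inner_self (x : E) : ‖x‖ = √‖Inner.inner A x x‖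

/-- A *-homomorphism `φ : B → C` is nondegenerate if the closed linear span of `φ(B)·C`
is all of `C`. -/
def Nondegenerate {B C : Type*} [NonUnitalCStarAlgebra B] [NonUnitalCStarAlgebra C]
    (φ : B →⋆ₙₐ[ℂ] C) : Prop :=
  closure (Submodule.span ℂ {c : C | ∃ b c₀, c = φ b * c₀} : Set C) = Set.univ

/-- The range ideal `B_E` of a Hilbert `B`-module `E`: the closed linear span of all
inner products `⟪x, y⟫`. -/
def rangeIdeal (B E : Type*) [NonUnitalCStarAlgebra B] [PartialOrder B] [StarOrderedRing B]
    [NormedAddCommGroup E] [NormedSpace ℂ E] [SMul Bᵐᵒᵖ E] [RightCStarModule B E] : Set B :=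
  closure (Submodule.span ℂ {b : B | ∃ x y : E, b = ⟪x, y⟫_B} : Set B)

variable {B C D E F G : Type*}
  [NonUnitalCStarAlgebra B] [PartialOrder B] [StarOrderedRing B]
  [NonUnitalCStarAlgebra C] [PartialOrder C] [StarOrderedRing C]
  [NonUnitalCStarAlgebra D] [PartialOrder D] [StarOrderedRing D]
  [NormedAddCommGroup E] [NormedSpace ℂ E] [SMul Bᵐᵒᵖ E] [RightCStarModule B E]
  [NormedAddCommGroup F] [NormedSpace ℂ F] [SMul Cᵐᵒᵖ F] [RightCStarModule C F]
  [NormedAddCommGroup G] [NormedSpace ℂ G] [SMul Dᵐᵒᵖ G] [RightCStarModule D G]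
/-- The automorphisms of B admitting a generalized unitary on E. -/
def HasGenUnitary (E : Type*) {B : Type*} [NonUnitalCStarAlgebra B] [PartialOrder B]
    [StarOrderedRing B] [NormedAddCommGroup E] [NormedSpace ℂ E] [SMul Bᵐᵒᵖ E]
    [RightCStarModule B E] (φ : B ≃⋆ₐ[ℂ] B) : Prop :=
  ∃ u : E → E, Function.Surjective u ∧ ∀ x y : E, ⟪u x, u y⟫_B = φ ⟪x, y⟫_B

/-!
A φ-unitary `u` is injective, since `u x = u y` forces all four inner products of `x` and `y`
to coincide, whence `⟪x - y, x - y⟫ = 0`. So `u` is bijective and its inverse is a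
φ⁻¹-unitary. An automorphism admitting a φ-unitary maps the generators `⟪x, y⟫` of
`B_E` to generators `⟪u x, u y⟫`, hence maps `B_E` into itself by continuity; this makes
the product and the inverse well defined on classes.
-/

namespace RightCStarModule

variable {A M : Type*} [NonUnitalRing A] [StarRing A] [Module ℂ A] [PartialOrder A] [Norm A]
  [AddCommGroup M] [Module ℂ M] [Norm M] [SMul Aᵐᵒᵖ M] [RightCStarModule A M]

lemma inner_sub_right (x y z : M) : ⟪x, y - z⟫_A = ⟪x, y⟫_A - ⟪x, z⟫_A :=
  map_sub (AddMonoidHom.mk' (fun w : M => ⟪x, w⟫_A) fun _ _ => inner_add_right) y z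

lemma inner_sub_left (x y z : M) : ⟪y - z, x⟫_A = ⟪y, x⟫_A - ⟪z, x⟫_A := by
  rw [← star_inner x, inner_sub_right, star_sub, star_inner, star_inner]

lemma injective_of_inner_map_map {f : A → A} (hf : Function.Injective f) {u : M → M}
    (hu : ∀ x y : M, ⟪u x, u y⟫_A = f ⟪x, y⟫_A) : Function.Injective u := by
  intro x y hxy
  have inner_eq : ∀ a b : M, u a = u x → u b = u x → ⟪a, b⟫_A = ⟪x, x⟫_A := fun a b ha hb =>
    hf <| by rw [← hu, ← hu, ha, hb]
  have hy : u y = u x := hxy.symm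
  have h_self : ⟪x - y, x - y⟫_A = 0 := by
    rw [inner_sub_left, inner_sub_right, inner_sub_right, inner_eq x x rfl rfl,
      inner_eq x y rfl hy, inner_eq y x hy rfl, inner_eq y y hy hy, sub_self]
  exact sub_eq_zero.mp (inner_self.mp h_self)

end RightCStarModule

lemma inner_mem_rangeIdeal (x y : E) : ⟪x, y⟫_B ∈ rangeIdeal B E :=
  subset_closure (Submodule.subset_span ⟨x, y, rfl⟩)

lemma hasGenUnitary_refl : HasGenUnitary E (StarAlgEquiv.refl ℂ B) :=
  ⟨id, Function.surjective_id, fun _ _ => rfl⟩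

namespace HasGenUnitary

variable {φ φ' : B ≃⋆ₐ[ℂ] B}

lemma trans (hφ : HasGenUnitary E φ) (hφ' : HasGenUnitary E φ') :
    HasGenUnitary E (φ'.trans φ) := by
  obtain ⟨u, hu_surj, hu⟩ := hφ
  obtain ⟨v, hv_surj, hv⟩ := hφ'
  exact ⟨u ∘ v, hu_surj.comp hv_surj, fun x y => by simp [hu, hv]⟩

lemma symm (hφ : HasGenUnitary E φ) : HasGenUnitary E φ.symm := by
  obtain ⟨u, hu_surj, hu⟩ := hφ
  let e := Equiv.ofBijective u
    ⟨RightCStarModule.injective_of_inner_map_map (EquivLike.injective φ) hu, hu_surj⟩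
  refine ⟨e.symm, e.symm.surjective, fun x y => EquivLike.injective φ ?_⟩
  rw [StarAlgEquiv.apply_symm_apply, ← hu]
  exact congr_arg₂ _ (e.apply_symm_apply x) (e.apply_symm_apply y)

lemma congr (hφ : HasGenUnitary E φ) (h : Set.EqOn φ φ' (rangeIdeal B E)) :
    HasGenUnitary E φ' := by
  obtain ⟨u, hu_surj, hu⟩ := hφ
  exact ⟨u, hu_surj, fun x y => by rw [hu, h (inner_mem_rangeIdeal x y)]⟩

lemma mapsTo_rangeIdeal (hφ : HasGenUnitary E φ) :
    Set.MapsTo φ (rangeIdeal B E) (rangeIdeal B E) := by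
  obtain ⟨u, -, hu⟩ := hφ
  have h_gen : Set.MapsTo (φ : B →ₗ[ℂ] B) {b : B | ∃ x y : E, b = ⟪x, y⟫_B}
      {b : B | ∃ x y : E, b = ⟪x, y⟫_B} := by
    rintro _ ⟨x, y, rfl⟩
    exact ⟨u x, u y, (hu x y).symm⟩
  exact h_gen.submoduleSpan.closure (StarAlgEquiv.isometry φ).continuous

lemma eqOn_symm (hφ : HasGenUnitary E φ) (h : Set.EqOn φ φ' (rangeIdeal B E)) :
    Set.EqOn φ.symm φ'.symm (rangeIdeal B E) := fun b hb =>
  EquivLike.injective φ' <| by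
    rw [StarAlgEquiv.apply_symm_apply, ← h (hφ.symm.mapsTo_rangeIdeal hb),
      StarAlgEquiv.apply_symm_apply]

lemma eqOn_trans {φ₁ φ₁' φ₂ φ₂' : B ≃⋆ₐ[ℂ] B} (hφ₂ : HasGenUnitary E φ₂)
    (h₁ : Set.EqOn φ₁ φ₁' (rangeIdeal B E)) (h₂ : Set.EqOn φ₂ φ₂' (rangeIdeal B E)) :
    Set.EqOn (φ₂.trans φ₁) (φ₂'.trans φ₁') (rangeIdeal B E) := fun b hb => by
  simp only [StarAlgEquiv.trans_apply]
  rw [h₁ (hφ₂.mapsTo_rangeIdeal hb), h₂ hb]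

end HasGenUnitary

/-- Φ_E is a group: the classes [φ]_E (automorphisms agreeing on the range ideal B_E) of
automorphisms admitting a φ-unitary on E are closed under the well-defined operations
[φ][φ'] = [φ ∘ φ'], contain the identity class, and are closed under the well-defined
inverse [φ]⁻¹ = [φ⁻¹]. -/
theorem PhiE_group :
    -- identity: [id_B]_E belongs to Φ_E
    HasGenUnitary E (StarAlgEquiv.refl ℂ B : B ≃⋆ₐ[ℂ] B) ∧
    -- closure under composition
    (∀ φ φ' : B ≃⋆ₐ[ℂ] B, HasGenUnitary E φ → HasGenUnitary E φ' →
      HasGenUnitary E (φ'.trans φ)) ∧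
    -- closure under inverse
    (∀ φ : B ≃⋆ₐ[ℂ] B, HasGenUnitary E φ → HasGenUnitary E φ.symm) ∧
    -- membership in Φ_E only depends on the class [φ]_E
    (∀ φ φ' : B ≃⋆ₐ[ℂ] B, HasGenUnitary E φ →
      Set.EqOn (⇑φ) (⇑φ') (rangeIdeal B E) → HasGenUnitary E φ') ∧
    -- the product is well-defined on classes
    (∀ φ₁ φ₁' φ₂ φ₂' : B ≃⋆ₐ[ℂ] B, HasGenUnitary E φ₁ → HasGenUnitary E φ₂ →
      Set.EqOn (⇑φ₁) (⇑φ₁') (rangeIdeal B E) → Set.EqOn (⇑φ₂) (⇑φ₂') (rangeIdeal B E) →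
      Set.EqOn (⇑(φ₂.trans φ₁)) (⇑(φ₂'.trans φ₁')) (rangeIdeal B E)) ∧
    -- the inverse is well-defined on classes
    (∀ φ φ' : B ≃⋆ₐ[ℂ] B, HasGenUnitary E φ → HasGenUnitary E φ' →
      Set.EqOn (⇑φ) (⇑φ') (rangeIdeal B E) →
      Set.EqOn (⇑φ.symm) (⇑φ'.symm) (rangeIdeal B E)) :=
  ⟨hasGenUnitary_refl,
    fun _ _ hφ hφ' => hφ.trans hφ',
    fun _ hφ => hφ.symm,
    fun _ _ hφ h => hφ.congr h,
    fun _ _ _ _ _ hφ₂ h₁ h₂ => hφ₂.eqOn_trans h₁ h₂,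
    fun _ _ hφ _ h => hφ.eqOn_symm h⟩
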